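/- arXiv:1801.07029 — 2 statements merged into one kernel-verified Lean document; each statement's English description precedes it below -/
import Mathlib

section
/- For every finite simple graph H there exists a routed network of conflict depth at most two whose routes are indexed by the edges of H, such that for every integer c ≥ 1 the network admits a (c,1)-periodic assignment if and only if H admits a proper edge coloring with c colors (adjacent edges receive distinct colors). -/
/-!
All weights are zero and `τ = 1`, so two routes collide exactly when they share an arc and their
offsets agree modulo `c`: a `(c,1)`-periodic assignment is a proper `c`-colouring of the graph on
the routes in which two routes are adjacent when they share an arc. Each vertex `x` of `H` becomes
the arc `(x, false) → (x, true)` and the route of an edge `{x, y}` runs through the arcs of its two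
endpoints, so this conflict graph is the line graph of `H`. The middle arc `(x, true) → (y, false)`
of a route lies on no other route, which bounds the conflict depth by two.
-/

/-- The set of `τ` consecutive residues modulo `P` starting at `t`. -/
def slotSet (P τ : ℕ) (t : ℤ) : Set (ZMod P) :=
  {s | ∃ k : ℕ, k < τ ∧ s = ((t + k : ℤ) : ZMod P)}

/-- The arcs of a route: its pairs of consecutive vertices. -/
def arcs {V : Type*} (r : List V) : List (V × V) := r.zip r.tail

/-- Latency of the `i`-th vertex of the route `r`: the sum of the weights of the
first `i` arcs of `r`. -/
def latency {V : Type*} (ω : V → V → ℕ) (r : List V) (i : ℕ) : ℕ :=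
  (((arcs r).map fun p => ω p.1 p.2).take i).sum

/-- Two routes with given offsets collide if they share an arc `(u, v)` and
their slot sets at `u` intersect. -/
def Collide {V : Type*} (ω : V → V → ℕ) (P τ : ℕ)
    (r₁ r₂ : List V) (m₁ m₂ : ℤ) : Prop :=
  ∃ i j : ℕ, i + 1 < r₁.length ∧ j + 1 < r₂.length ∧
    r₁[i]? = r₂[j]? ∧ r₁[i + 1]? = r₂[j + 1]? ∧
    (slotSet P τ (m₁ + latency ω r₁ i) ∩ slotSet P τ (m₂ + latency ω r₂ j)).Nonempty

/-- A `(P,τ)`-periodic assignment: offsets such that no two distinct routes collide. -/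
def IsPeriodicAssignment {V ι : Type*} (ω : V → V → ℕ) (routes : ι → List V)
    (P τ : ℕ) (m : ι → ℤ) : Prop :=
  ∀ a b : ι, a ≠ b → ¬ Collide ω P τ (routes a) (routes b) (m a) (m b)


/-- The arcs of route `a` that also belong to some other route. -/
def sharedArcs {V ι : Type*} (routes : ι → List V) (a : ι) : Set (V × V) :=
  {p | p ∈ arcs (routes a) ∧ ∃ b : ι, b ≠ a ∧ p ∈ arcs (routes b)}

section ZeroWeights

variable {V ι : Type*}

theorem mem_arcs_iff {r : List V} {p : V × V} :
    p ∈ arcs r ↔ ∃ i, i + 1 < r.length ∧ r[i]? = some p.1 ∧ r[i + 1]? = some p.2 := by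
  simp only [arcs, List.mem_iff_getElem?, List.getElem?_zip_eq_some, List.getElem?_tail]
  constructor
  · rintro ⟨i, h1, h2⟩
    exact ⟨i, by grind, h1, h2⟩
  · rintro ⟨i, -, h1, h2⟩
    exact ⟨i, h1, h2⟩

def conflictGraph (routes : ι → List V) : SimpleGraph ι where
  Adj a b := a ≠ b ∧ ∃ p, p ∈ arcs (routes a) ∧ p ∈ arcs (routes b)
  symm := ⟨fun _ _ ⟨hne, p, ha, hb⟩ => ⟨hne.symm, p, hb, ha⟩⟩

theorem slotSet_one (P : ℕ) (t : ℤ) : slotSet P 1 t = {(t : ZMod P)} := by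
  ext s
  simp [slotSet]

theorem collide_zero_one_iff {P : ℕ} {r₁ r₂ : List V} {m₁ m₂ : ℤ} :
    Collide (fun _ _ => 0) P 1 r₁ r₂ m₁ m₂ ↔
      (∃ p, p ∈ arcs r₁ ∧ p ∈ arcs r₂) ∧ (m₁ : ZMod P) = m₂ := by
  simp only [Collide, latency, List.map_const', List.take_replicate, List.sum_replicate, smul_zero,
    Nat.cast_zero, add_zero, slotSet_one, Set.singleton_inter_nonempty, Set.mem_singleton_iff,
    mem_arcs_iff]
  constructor
  · rintro ⟨i, j, hi, hj, hu, hv, hm⟩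
    refine ⟨⟨(r₁[i], r₁[i + 1]), ⟨i, hi, ?_, ?_⟩, j, hj, ?_, ?_⟩, hm⟩ <;> grind
  · rintro ⟨⟨p, ⟨i, hi, hu, hv⟩, j, hj, hu', hv'⟩, hm⟩
    exact ⟨i, j, hi, hj, hu.trans hu'.symm, hv.trans hv'.symm, hm⟩

theorem isPeriodicAssignment_zero_one_iff {routes : ι → List V} {P : ℕ} {m : ι → ℤ} :
    IsPeriodicAssignment (fun _ _ => 0) routes P 1 m ↔
      ∀ a b, (conflictGraph routes).Adj a b → (m a : ZMod P) ≠ m b := by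
  simp only [IsPeriodicAssignment, collide_zero_one_iff, conflictGraph]
  exact forall₂_congr fun _ _ => by grind

theorem SimpleGraph.colorable_iff_exists_fin_coloring {G : SimpleGraph ι} {n : ℕ} :
    G.Colorable n ↔ ∃ f : ι → Fin n, ∀ a b, G.Adj a b → f a ≠ f b :=
  ⟨fun ⟨C⟩ => ⟨C, fun _ _ => C.valid⟩, fun ⟨f, hf⟩ => ⟨.mk f (hf _ _)⟩⟩

theorem exists_isPeriodicAssignment_iff_colorable {routes : ι → List V} {c : ℕ} [NeZero c] :
    (∃ m, IsPeriodicAssignment (fun _ _ => 0) routes c 1 m) ↔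
      (conflictGraph routes).Colorable c := by
  simp only [isPeriodicAssignment_zero_one_iff, SimpleGraph.colorable_iff_exists_fin_coloring]
  constructor
  · rintro ⟨m, hm⟩
    exact ⟨fun a => (ZMod.finEquiv c).symm (m a), fun a b h => by simpa using hm a b h⟩
  · rintro ⟨f, hf⟩
    refine ⟨fun a => Function.surjInv ZMod.intCast_surjective (ZMod.finEquiv c (f a)),
      fun a b h => ?_⟩
    simpa only [Function.surjInv_eq, (ZMod.finEquiv c).injective.ne_iff] using hf a b h

end ZeroWeights

section EdgeRoute

variable {X ι : Type*}

def edgeRoute (p : X × X) : List (X × Bool) :=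
  [(p.1, false), (p.1, true), (p.2, false), (p.2, true)]

theorem arcs_edgeRoute (p : X × X) :
    arcs (edgeRoute p) =
      [((p.1, false), (p.1, true)), ((p.1, true), (p.2, false)), ((p.2, false), (p.2, true))] :=
  rfl

theorem nodup_edgeRoute {p : X × X} (h : p.1 ≠ p.2) : (edgeRoute p).Nodup := by
  simp [edgeRoute, h]

theorem exists_mem_arcs_edgeRoute_iff {p q : X × X} :
    (∃ a, a ∈ arcs (edgeRoute p) ∧ a ∈ arcs (edgeRoute q)) ↔
      p.1 = q.1 ∨ p.1 = q.2 ∨ p.2 = q.1 ∨ p.2 = q.2 := by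
  simp [arcs_edgeRoute]
  tauto

theorem sharedArcs_edgeRoute_subset {orient : ι → X × X} (h : Function.Injective orient)
    (a : ι) :
    sharedArcs (edgeRoute ∘ orient) a ⊆
      {(((orient a).1, false), ((orient a).1, true)),
        (((orient a).2, false), ((orient a).2, true))} := by
  rintro p ⟨hpa, b, hba, hpb⟩
  simp only [Function.comp, arcs_edgeRoute, List.mem_cons, List.not_mem_nil, or_false] at hpa hpb
  rcases hpa with rfl | rfl | rfl
  · exact Or.inl rfl
  · refine absurd (h (Prod.ext ?_ ?_)) hba <;>
      rcases hpb with hp | hp | hp <;> simp_all [Prod.ext_iff]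
  · exact Or.inr rfl

theorem ncard_sharedArcs_edgeRoute_le_two {orient : ι → X × X} (h : Function.Injective orient)
    (a : ι) :
    (sharedArcs (edgeRoute ∘ orient) a).ncard ≤ 2 :=
  (Set.ncard_le_ncard (sharedArcs_edgeRoute_subset h a) (Set.toFinite _)).trans <|
    (Set.ncard_insert_le _ _).trans (by rw [Set.ncard_singleton])

end EdgeRoute

section LineGraph

variable {W X : Type*} {H : SimpleGraph W}

theorem Sym2.mem_iff_eq_out {e : Sym2 W} {w : W} : w ∈ e ↔ w = e.out.1 ∨ w = e.out.2 := by
  conv_lhs => rw [← Quot.out_eq e]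
  exact Sym2.mem_iff

theorem Sym2.out_fst_ne_out_snd {e : Sym2 W} (h : ¬e.IsDiag) : e.out.1 ≠ e.out.2 := by
  rw [← Quot.out_eq e] at h
  exact h

noncomputable def orientEdge (σ : W ↪ X) (e : H.edgeSet) : X × X :=
  Prod.map σ σ (e : Sym2 W).out

theorem orientEdge_injective (σ : W ↪ X) : Function.Injective (orientEdge (H := H) σ) := by
  intro e₁ e₂ h
  have hout : (e₁ : Sym2 W).out = (e₂ : Sym2 W).out := σ.injective.prodMap σ.injective h
  exact Subtype.ext (by rw [← Quot.out_eq (e₁ : Sym2 W), ← Quot.out_eq (e₂ : Sym2 W), hout])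

theorem orientEdge_fst_ne_snd (σ : W ↪ X) (e : H.edgeSet) :
    (orientEdge σ e).1 ≠ (orientEdge σ e).2 :=
  σ.injective.ne (Sym2.out_fst_ne_out_snd (H.not_isDiag_of_mem_edgeSet e.2))

theorem conflictGraph_edgeRoute_orientEdge (σ : W ↪ X) :
    conflictGraph (edgeRoute ∘ orientEdge (H := H) σ) = H.lineGraph := by
  ext e₁ e₂
  simp only [conflictGraph, Function.comp, exists_mem_arcs_edgeRoute_iff, orientEdge, Prod.map,
    σ.injective.eq_iff, SimpleGraph.lineGraph_adj_iff_exists, Sym2.mem_iff_eq_out]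
  exact and_congr_right fun _ => by aesop

end LineGraph

theorem edge_coloring_reduction_general {W : Type*} [Fintype W]
    (H : SimpleGraph W) :
    ∃ (V : Type) (_ : Fintype V) (routes : H.edgeSet → List V) (ω : V → V → ℕ),
      (∀ e : H.edgeSet, (routes e).Nodup) ∧
      (∀ e : H.edgeSet, (sharedArcs routes e).ncard ≤ 2) ∧
      (∀ c : ℕ, 1 ≤ c →
        ((∃ m : H.edgeSet → ℤ, IsPeriodicAssignment ω routes c 1 m) ↔
         (∃ f : H.edgeSet → Fin c, ∀ e₁ e₂ : H.edgeSet, e₁ ≠ e₂ →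
            (∃ v : W, v ∈ (e₁ : Sym2 W) ∧ v ∈ (e₂ : Sym2 W)) → f e₁ ≠ f e₂))) := by
  let orient := orientEdge (H := H) (Fintype.equivFin W).toEmbedding
  refine ⟨Fin (Fintype.card W) × Bool, inferInstance, edgeRoute ∘ orient, fun _ _ => 0,
    fun e => nodup_edgeRoute (orientEdge_fst_ne_snd _ e),
    ncard_sharedArcs_edgeRoute_le_two (orientEdge_injective _), fun c hc => ?_⟩
  have : NeZero c := ⟨by omega⟩
  rw [exists_isPeriodicAssignment_iff_colorable, conflictGraph_edgeRoute_orientEdge,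
    SimpleGraph.colorable_iff_exists_fin_coloring]
  simp only [SimpleGraph.lineGraph_adj_iff_exists, and_imp]

/-- For every finite simple graph `H` there is a routed network of conflict depth
at most two, with routes indexed by the edges of `H`, which admits a
`(c,1)`-periodic assignment exactly when `H` admits a proper edge coloring with
`c` colors. -/
theorem edge_coloring_reduction {W : Type*} [Fintype W] [DecidableEq W]
    (H : SimpleGraph W) [DecidableRel H.Adj] :
    ∃ (V : Type) (_ : Fintype V) (routes : H.edgeSet → List V) (ω : V → V → ℕ),
      (∀ e : H.edgeSet, (routes e).Nodup) ∧
      (∀ e : H.edgeSet, (sharedArcs routes e).ncard ≤ 2) ∧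
      (∀ c : ℕ, 1 ≤ c →
        ((∃ m : H.edgeSet → ℤ, IsPeriodicAssignment ω routes c 1 m) ↔
         (∃ f : H.edgeSet → Fin c, ∀ e₁ e₂ : H.edgeSet, e₁ ≠ e₂ →
            (∃ v : W, v ∈ (e₁ : Sym2 W) ∧ v ∈ (e₂ : Sym2 W)) → f e₁ ≠ f e₂))) :=
  edge_coloring_reduction_general H
end

section
/- Normalization of periodic single-machine schedules: if a feasible schedule exists, then there exists a feasible schedule y with additionally y i ≤ 2·P − τ for every i. -/
/-- Feasibility for periodic single-machine scheduling: the job `i0` is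
scheduled at time `0`, every job is scheduled between its release time and its
deadline, and the slot sets of distinct jobs are pairwise disjoint. -/
def FeasibleSchedule (n P τ : ℕ) (RT : Fin n → ℕ) (D : Fin n → ℤ) (i0 : Fin n)
    (y : Fin n → ℤ) : Prop :=
  y i0 = 0 ∧
  (∀ i : Fin n, (RT i : ℤ) ≤ y i ∧ y i ≤ D i) ∧
  (∀ i j : Fin n, i ≠ j → Disjoint (slotSet P τ (y i)) (slotSet P τ (y j)))

theorem toIcoMod_le_self {α : Type*} [AddCommGroup α] [LinearOrder α] [IsOrderedAddMonoid α]
    [Archimedean α] {p : α} (hp : 0 < p) {a b : α} (hab : a ≤ b) : toIcoMod hp a b ≤ b := by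
  have hdiv : 0 ≤ toIcoDiv hp a b := by
    by_contra! hneg
    have hp_le : p ≤ -(toIcoDiv hp a b • p) := by
      simpa [le_neg] using zsmul_le_zsmul_left hp.le (show toIcoDiv hp a b ≤ -1 by omega)
    have hlt := toIcoMod_lt_right hp a b
    rw [← self_sub_toIcoDiv_zsmul, sub_eq_add_neg] at hlt
    exact (add_le_add hab hp_le).not_gt hlt
  rw [← self_sub_toIcoDiv_zsmul]
  exact sub_le_self _ (zsmul_nonneg hp.le hdiv)

theorem intCast_toIcoMod {P : ℕ} (hP : (0 : ℤ) < P) (a b : ℤ) :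
    ((toIcoMod hP a b : ℤ) : ZMod P) = b := by
  rw [ZMod.intCast_eq_intCast_iff_dvd_sub, self_sub_toIcoMod_eq_mul]
  exact dvd_mul_left _ _

section slotSet

variable {P τ : ℕ}

theorem slotSet_congr {s t : ℤ} (h : (s : ZMod P) = t) : slotSet P τ s = slotSet P τ t := by
  ext x
  simp only [slotSet, Set.mem_ofPred_eq, Int.cast_add, h]

theorem intCast_mem_slotSet {t a : ℤ} (hta : t ≤ a) (hat : a < t + τ) :
    (a : ZMod P) ∈ slotSet P τ t :=
  ⟨(a - t).toNat, by omega, by rw [Int.toNat_of_nonneg (by omega), add_sub_cancel]⟩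

end slotSet

namespace FeasibleSchedule

variable {n P τ : ℕ} {RT : Fin n → ℕ} {D : Fin n → ℤ} {i0 : Fin n} {y : Fin n → ℤ}

theorem toIcoMod (hy : FeasibleSchedule n P τ RT D i0 y) (hP : (0 : ℤ) < P) :
    FeasibleSchedule n P τ RT D i0 (fun i => _root_.toIcoMod hP (RT i) (y i)) := by
  obtain ⟨hy0, hbounds, hdisj⟩ := hy
  have hle (i : Fin n) : _root_.toIcoMod hP (RT i) (y i) ≤ y i :=
    toIcoMod_le_self hP (hbounds i).1
  refine ⟨?_, fun i => ⟨left_le_toIcoMod hP _ _, (hle i).trans (hbounds i).2⟩, ?_⟩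
  · exact le_antisymm (hy0 ▸ hle i0) ((Int.natCast_nonneg _).trans (left_le_toIcoMod hP _ _))
  · intro i j hij
    simpa only [slotSet_congr (intCast_toIcoMod hP _ _)] using hdisj i j hij

theorem le_two_mul_sub_of_lt (hy : FeasibleSchedule n P τ RT D i0 y) (hτP : τ ≤ 2 * P)
    {i : Fin n} (hlt : y i < 2 * P) : y i ≤ 2 * P - τ := by
  by_cases hi : i = i0
  · rw [hi, hy.1]
    omega
  by_contra! hgt
  -- the slot `2P ≡ 0` is taken both by job `i` and by job `i0`, which starts at `0`
  have hwrap : ((2 * P : ℤ) : ZMod P) = ((0 : ℤ) : ZMod P) := by simp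
  refine Set.disjoint_left.mp (hy.2.2 i i0 hi) (intCast_mem_slotSet (le_of_lt hlt) (by omega)) ?_
  rw [hwrap, hy.1]
  exact intCast_mem_slotSet le_rfl (by omega)

end FeasibleSchedule

theorem schedule_normalization_general (n P τ : ℕ) (hn : 0 < n)
    (hτP : τ ≤ P) (RT : Fin n → ℕ) (D : Fin n → ℤ)
    (hRT : ∀ i : Fin n, RT i < P)
    (h : ∃ y : Fin n → ℤ, FeasibleSchedule n P τ RT D ⟨0, hn⟩ y) :
    ∃ y : Fin n → ℤ, FeasibleSchedule n P τ RT D ⟨0, hn⟩ y ∧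
      ∀ i : Fin n, y i ≤ 2 * (P : ℤ) - (τ : ℤ) := by
  obtain ⟨y, hy⟩ := h
  have hP : (0 : ℤ) < P := by
    have := hRT ⟨0, hn⟩
    omega
  refine ⟨_, hy.toIcoMod hP, fun i => (hy.toIcoMod hP).le_two_mul_sub_of_lt (by omega) ?_⟩
  have := toIcoMod_lt_right hP (RT i : ℤ) (y i)
  have := hRT i
  omega

/-- Normalization of periodic single-machine schedules: if a feasible schedule
exists, then there is a feasible schedule `y` with `y i ≤ 2·P − τ` for all `i`. -/
theorem schedule_normalization (n P τ : ℕ) (hn : 0 < n) (hτ : 1 ≤ τ)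
    (hτP : τ ≤ P) (RT : Fin n → ℕ) (D : Fin n → ℤ)
    (hRT0 : RT ⟨0, hn⟩ = 0) (hRT : ∀ i : Fin n, RT i < P)
    (h : ∃ y : Fin n → ℤ, FeasibleSchedule n P τ RT D ⟨0, hn⟩ y) :
    ∃ y : Fin n → ℤ, FeasibleSchedule n P τ RT D ⟨0, hn⟩ y ∧
      ∀ i : Fin n, y i ≤ 2 * (P : ℤ) - (τ : ℤ) :=
  schedule_normalization_general n P τ hn hτP RT D hRT h
end
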